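/- Let d ≥ 1, α ∈ ℝ, and let V : ℝ^d → ℝ be twice continuously differentiable with ∇²V(x) ⪰ α I_d for all x, with V and ∇V of at most polynomial growth and e^{−V} integrable; let π be the probability measure with density e^{−V}/Z. Fix m₀, m₁ ∈ ℝ^d and ε₀, ε₁ > 0, and for t ∈ [0,1] set m_t = (1−t)m₀ + t m₁ and ε_t = ((1−t)√ε₀ + t√ε₁)². Then the function f(t) = KL(N(m_t, ε_t I_d) | π) satisfies, for all t ∈ [0,1]: f(t) ≤ (1−t) f(0) + t f(1) − (α/2) t(1−t) ( ‖m₀ − m₁‖² + d (√ε₀ − √ε₁)² ). -/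

import Mathlib

open MeasureTheory Real
open scoped RealInnerProductSpace

/-- Density of the isotropic Gaussian `N(m, ε I_d)` on `ℝ^d`. -/
noncomputable def gaussPDF (d : ℕ) (m : EuclideanSpace ℝ (Fin d)) (ε : ℝ)
    (x : EuclideanSpace ℝ (Fin d)) : ℝ :=
  (2 * Real.pi * ε) ^ (-(d : ℝ) / 2) * Real.exp (-‖x - m‖ ^ 2 / (2 * ε))

/-- (reverse) KL divergence between probability densities on `ℝ^d`. -/
noncomputable def klDensity (d : ℕ) (f g : EuclideanSpace ℝ (Fin d) → ℝ) : ℝ :=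
  ∫ x, f x * Real.log (f x / g x)

/-!
Realise `N(m, s² I)` as the law of `m + s • z` with `z` standard Gaussian. A change of variables
gives `KL(N(m, s² I) | π) = 𝔼[V (m + s • z)] - d log s + const`. Along the geodesic,
`m_t + s_t • z` is the convex combination of `m₀ + s₀ • z` and `m₁ + s₁ • z`, so `α`-strong
convexity of `V` (which is what `∇²V ⪰ α` gives), applied for each `z` and averaged, bounds the
potential term with defect `(α/2) t (1-t) 𝔼‖(m₀ - m₁) + (s₀ - s₁) • z‖²`, and this expectation is
`‖m₀ - m₁‖² + d (s₀ - s₁)²`. The entropy term `-d log s_t` is convex in `t` because `s_t` is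
affine in `t` and `log` is concave.
-/

open Set

section StrongConvexity

theorem strongConvexOn_univ_of_hasDerivAt2 {m : ℝ} {f f' f'' : ℝ → ℝ}
    (hf : ∀ x, HasDerivAt f (f' x) x) (hf' : ∀ x, HasDerivAt f' (f'' x) x)
    (hf'' : ∀ x, m ≤ f'' x) : StrongConvexOn univ m f := by
  rw [strongConvexOn_iff_convex]
  simp only [norm_eq_abs, sq_abs]
  have hsq (x : ℝ) : HasDerivAt (fun x ↦ m / 2 * x ^ 2) (m * x) x :=
    ((hasDerivAt_pow 2 x).const_mul (m / 2)).congr_deriv (by ring)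
  refine convexOn_of_hasDerivWithinAt2_nonneg convex_univ
    (fun x _ ↦ ((hf x).sub (hsq x)).continuousAt.continuousWithinAt)
    (fun x _ ↦ ((hf x).sub (hsq x)).hasDerivWithinAt)
    (fun x _ ↦ ((hf' x).sub ((hasDerivAt_id x).const_mul m)).hasDerivWithinAt) ?_
  intro x _
  simpa using hf'' x

theorem hasDerivAt_comp_add_smul {E F : Type*} [NormedAddCommGroup E] [NormedSpace ℝ E]
    [NormedAddCommGroup F] [NormedSpace ℝ F] {g : E → F} (hg : Differentiable ℝ g) (x u : E)
    (τ : ℝ) : HasDerivAt (fun τ : ℝ ↦ g (x + τ • u)) (fderiv ℝ g (x + τ • u) u) τ := by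
  have hline : HasDerivAt (fun τ : ℝ ↦ x + τ • u) u τ := by
    simpa using ((hasDerivAt_id τ).smul_const u).const_add x
  exact (hg _).hasFDerivAt.comp_hasDerivAt τ hline

variable {E : Type*} [NormedAddCommGroup E] [InnerProductSpace ℝ E]

theorem strongConvexOn_univ_of_comp_line {m : ℝ} {f : E → ℝ}
    (h : ∀ x u : E, StrongConvexOn univ (m * ‖u‖ ^ 2) fun τ : ℝ ↦ f (x + τ • u)) :
    StrongConvexOn univ m f := by
  refine ⟨convex_univ, fun x _ y _ a b ha hb hab ↦ ?_⟩
  have := (h y (x - y)).2 (mem_univ 1) (mem_univ 0) ha hb hab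
  obtain rfl : b = 1 - a := by linarith
  have hline : a • x + (1 - a) • y = y + a • (x - y) := by module
  simp only [smul_eq_mul, one_smul, zero_smul, add_sub_cancel, add_zero, mul_one, mul_zero,
    sub_zero, norm_eq_abs, abs_one] at this
  rw [hline]
  refine this.trans_eq ?_
  simp only [smul_eq_mul]
  ring

variable [CompleteSpace E]

theorem strongConvexOn_univ_of_hessian {α : ℝ} {V : E → ℝ} (hV : ContDiff ℝ 2 V)
    (hHess : ∀ x v : E, α * ‖v‖ ^ 2 ≤ ⟪v, (fderiv ℝ (gradient V) x) v⟫) :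
    StrongConvexOn univ α V := by
  have hgrad : Differentiable ℝ (gradient V) :=
    ((InnerProductSpace.toDual ℝ E).symm.contDiff.comp
      (hV.fderiv_right (m := 1) (by norm_num))).differentiable one_ne_zero
  refine strongConvexOn_univ_of_comp_line fun x u ↦ strongConvexOn_univ_of_hasDerivAt2
    (f' := fun τ ↦ ⟪gradient V (x + τ • u), u⟫)
    (f'' := fun τ ↦ ⟪fderiv ℝ (gradient V) (x + τ • u) u, u⟫) (fun τ ↦ ?_) (fun τ ↦ ?_)
    fun _ ↦ real_inner_comm u _ ▸ hHess _ u
  · rw [inner_gradient_left]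
    exact hasDerivAt_comp_add_smul (hV.differentiable two_ne_zero) x u τ
  · exact ((hasDerivAt_comp_add_smul hgrad x u τ).inner ℝ (hasDerivAt_const τ u)).congr_deriv
      (by simp)

end StrongConvexity

section GaussianMeasure

open Module
open scoped NNReal

theorem integral_pow_add_two_mul_exp_neg_sq_div_two (k : ℕ) :
    ∫ y in Ioi (0 : ℝ), y ^ (k + 2) * exp (-y ^ 2 / 2)
      = (k + 1) * ∫ y in Ioi (0 : ℝ), y ^ k * exp (-y ^ 2 / 2) := by
  have hgamma (j : ℕ) : ∫ y in Ioi (0 : ℝ), y ^ j * exp (-y ^ 2 / 2)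
      = (1 / 2 : ℝ) ^ (-((j : ℝ) + 1) / 2) * (1 / 2) * Gamma (((j : ℝ) + 1) / 2) := by
    rw [← integral_rpow_mul_exp_neg_mul_rpow two_pos (by linarith [j.cast_nonneg (α := ℝ)])
      one_half_pos]
    refine setIntegral_congr_fun measurableSet_Ioi fun y _ ↦ ?_
    rw [rpow_two, rpow_natCast]
    ring_nf
  have hexp : -(((k + 2 : ℕ) : ℝ) + 1) / 2 = -((k : ℝ) + 1) / 2 + -1 := by push_cast; ring
  have harg : (((k + 2 : ℕ) : ℝ) + 1) / 2 = ((k : ℝ) + 1) / 2 + 1 := by push_cast; ring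
  rw [hgamma, hgamma, hexp, harg, rpow_add one_half_pos, rpow_neg_one,
    Gamma_add_one (by positivity)]
  ring

variable {E : Type*} [NormedAddCommGroup E] [InnerProductSpace ℝ E]

noncomputable def gaussianDensity (z : E) : ℝ≥0 :=
  ((2 * π) ^ (-(finrank ℝ E : ℝ) / 2) * exp (-‖z‖ ^ 2 / 2)).toNNReal

theorem coe_gaussianDensity (z : E) :
    (gaussianDensity z : ℝ) = (2 * π) ^ (-(finrank ℝ E : ℝ) / 2) * exp (-‖z‖ ^ 2 / 2) :=
  Real.coe_toNNReal _ (by positivity)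

variable [MeasurableSpace E] [BorelSpace E]

theorem measurable_gaussianDensity : Measurable (gaussianDensity : E → ℝ≥0) :=
  Measurable.real_toNNReal (by fun_prop)

variable [FiniteDimensional ℝ E]

theorem integrable_exp_neg_mul_sq_norm {b : ℝ} (hb : 0 < b) :
    Integrable fun z : E ↦ exp (-b * ‖z‖ ^ 2) := by
  refine Integrable.of_integral_ne_zero ?_
  rw [GaussianFourier.integral_rexp_neg_mul_sq_norm hb]
  positivity

theorem integral_exp_neg_sq_norm_div_two :
    ∫ z : E, exp (-‖z‖ ^ 2 / 2) = (2 * π) ^ (finrank ℝ E / 2 : ℝ) := by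
  simp_rw [neg_div, div_eq_inv_mul, ← neg_mul]
  rw [GaussianFourier.integral_rexp_neg_mul_sq_norm (by norm_num)]
  congr 1 <;> ring

theorem integral_norm_sq_mul_exp_neg_sq_norm_div_two :
    ∫ z : E, ‖z‖ ^ 2 * exp (-‖z‖ ^ 2 / 2) = finrank ℝ E * ∫ z : E, exp (-‖z‖ ^ 2 / 2) := by
  rcases (finrank ℝ E).eq_zero_or_pos with hE | hE
  · have : Subsingleton E := finrank_zero_iff.mp hE
    simp [hE, Subsingleton.elim _ (0 : E)]
  have : Nontrivial E := nontrivial_of_finrank_pos hE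
  obtain ⟨k, hk⟩ : ∃ k, finrank ℝ E = k + 1 := ⟨_, (Nat.succ_pred_eq_of_pos hE).symm⟩
  have := integral_fun_norm_addHaar (volume : Measure E) fun y ↦ y ^ 2 * exp (-y ^ 2 / 2)
  rw [integral_fun_norm_addHaar (volume : Measure E) fun y ↦ exp (-y ^ 2 / 2), this, hk,
    Nat.add_sub_cancel]
  simp only [smul_eq_mul, nsmul_eq_mul, ← mul_assoc, ← pow_add,
    integral_pow_add_two_mul_exp_neg_sq_div_two]
  push_cast
  ring

-- `ProbabilityTheory.stdGaussian` is a pushforward of a product measure with no density lemma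
-- available, whereas the computations below need the Lebesgue density.
variable (E) in
noncomputable def gaussianMeasure : Measure E :=
  volume.withDensity fun z ↦ gaussianDensity z

theorem integral_gaussianMeasure (F : E → ℝ) :
    ∫ z, F z ∂gaussianMeasure E
      = (2 * π) ^ (-(finrank ℝ E : ℝ) / 2) * ∫ z, exp (-‖z‖ ^ 2 / 2) * F z := by
  rw [gaussianMeasure, integral_withDensity_eq_integral_smul measurable_gaussianDensity,
    ← integral_const_mul]
  simp only [NNReal.smul_def, coe_gaussianDensity, smul_eq_mul, mul_assoc]

theorem integrable_gaussianMeasure_iff {F : E → ℝ} :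
    Integrable F (gaussianMeasure E) ↔ Integrable fun z ↦ exp (-‖z‖ ^ 2 / 2) * F z := by
  rw [gaussianMeasure, integrable_withDensity_iff_integrable_smul measurable_gaussianDensity]
  simp only [NNReal.smul_def, coe_gaussianDensity, smul_eq_mul, mul_assoc]
  exact integrable_const_mul_iff (isUnit_iff_ne_zero.mpr (by positivity)) _

theorem integral_gaussianDensity : ∫ z : E, (gaussianDensity z : ℝ) = 1 := by
  simp only [coe_gaussianDensity]
  rw [integral_const_mul, integral_exp_neg_sq_norm_div_two, ← rpow_add (by positivity),
    neg_div, neg_add_cancel, rpow_zero]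

instance : IsProbabilityMeasure (gaussianMeasure E) := by
  constructor
  have hint : Integrable fun z : E ↦ (gaussianDensity z : ℝ) := by
    simp only [coe_gaussianDensity]
    refine Integrable.const_mul ?_ _
    simpa [neg_div, div_eq_inv_mul] using
      integrable_exp_neg_mul_sq_norm (E := E) (b := 1 / 2) (by norm_num)
  rw [gaussianMeasure, withDensity_apply _ MeasurableSet.univ, Measure.restrict_univ,
    lintegral_coe_eq_integral _ hint, integral_gaussianDensity, ENNReal.ofReal_one]

theorem integrable_one_add_norm_pow_gaussianMeasure (k : ℕ) :
    Integrable (fun z : E ↦ (1 + ‖z‖) ^ k) (gaussianMeasure E) := by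
  rw [integrable_gaussianMeasure_iff]
  refine ((integrable_exp_neg_mul_sq_norm (E := E) (b := 1 / 4) (by norm_num)).const_mul
    (k.factorial * exp 2)).mono' (by fun_prop) (ae_of_all _ fun z ↦ ?_)
  have hpow : (1 + ‖z‖) ^ k ≤ k.factorial * exp (1 + ‖z‖) := by
    have := pow_div_factorial_le_exp (x := 1 + ‖z‖) (by positivity) k
    rwa [div_le_iff₀ (by positivity), mul_comm] at this
  have hexp : exp (1 + ‖z‖) * exp (-‖z‖ ^ 2 / 2) ≤ exp 2 * exp (-(1 / 4) * ‖z‖ ^ 2) := by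
    rw [← exp_add, ← exp_add, exp_le_exp]
    nlinarith [sq_nonneg (‖z‖ / 2 - 1)]
  rw [norm_mul, norm_of_nonneg (by positivity), norm_of_nonneg (by positivity)]
  calc exp (-‖z‖ ^ 2 / 2) * (1 + ‖z‖) ^ k
      ≤ exp (-‖z‖ ^ 2 / 2) * (k.factorial * exp (1 + ‖z‖)) := by gcongr
    _ = k.factorial * (exp (1 + ‖z‖) * exp (-‖z‖ ^ 2 / 2)) := by ring
    _ ≤ k.factorial * (exp 2 * exp (-(1 / 4) * ‖z‖ ^ 2)) := by gcongr
    _ = k.factorial * exp 2 * exp (-(1 / 4) * ‖z‖ ^ 2) := by ring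

theorem integrable_gaussianMeasure_of_abs_le {G : E → ℝ}
    (hG : AEStronglyMeasurable G (gaussianMeasure E)) {C : ℝ} {k : ℕ}
    (hbound : ∀ z, |G z| ≤ C * (1 + ‖z‖) ^ k) : Integrable G (gaussianMeasure E) :=
  ((integrable_one_add_norm_pow_gaussianMeasure k).const_mul C).mono' hG (ae_of_all _ hbound)

theorem integrable_comp_add_smul_gaussianMeasure {G : E → ℝ} (hG : Continuous G)
    (hgrowth : ∃ (C : ℝ) (k : ℕ), ∀ x, |G x| ≤ C * (1 + ‖x‖) ^ k) (m : E) (s : ℝ) :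
    Integrable (fun z ↦ G (m + s • z)) (gaussianMeasure E) := by
  obtain ⟨C, k, hbound⟩ := hgrowth
  have hC : 0 ≤ C := by simpa using (abs_nonneg _).trans (hbound 0)
  refine integrable_gaussianMeasure_of_abs_le (by fun_prop) (C := C * (1 + ‖m‖ + |s|) ^ k)
    (k := k) fun z ↦ (hbound _).trans ?_
  rw [mul_assoc, ← mul_pow]
  gcongr
  calc 1 + ‖m + s • z‖ ≤ 1 + ‖m‖ + |s| * ‖z‖ := by
        grw [norm_add_le, norm_smul, norm_eq_abs, add_assoc]
    _ ≤ (1 + ‖m‖ + |s|) * (1 + ‖z‖) := by nlinarith [norm_nonneg m, norm_nonneg z, abs_nonneg s]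

theorem integrable_norm_add_smul_sq_gaussianMeasure (a : E) (c : ℝ) :
    Integrable (fun z ↦ ‖a + c • z‖ ^ 2) (gaussianMeasure E) :=
  integrable_comp_add_smul_gaussianMeasure (G := fun x ↦ ‖x‖ ^ 2) (by fun_prop)
    ⟨1, 2, fun x ↦ by rw [abs_of_nonneg (by positivity), one_mul]; gcongr; linarith⟩ a c

theorem integrable_norm_sq_gaussianMeasure :
    Integrable (fun z : E ↦ ‖z‖ ^ 2) (gaussianMeasure E) := by
  simpa using integrable_norm_add_smul_sq_gaussianMeasure (0 : E) 1

theorem integral_inner_gaussianMeasure (a : E) : ∫ z, ⟪a, z⟫ ∂gaussianMeasure E = 0 := by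
  have hodd := integral_neg_eq_self (fun z : E ↦ exp (-‖z‖ ^ 2 / 2) * ⟪a, z⟫) volume
  simp only [norm_neg, inner_neg_right, mul_neg, integral_neg] at hodd
  rw [integral_gaussianMeasure, show ∫ z, exp (-‖z‖ ^ 2 / 2) * ⟪a, z⟫ = 0 by linarith, mul_zero]

theorem integral_norm_sq_gaussianMeasure :
    ∫ z, ‖z‖ ^ 2 ∂gaussianMeasure E = finrank ℝ E := by
  rw [integral_gaussianMeasure]
  simp_rw [mul_comm (exp _)]
  rw [integral_norm_sq_mul_exp_neg_sq_norm_div_two, integral_exp_neg_sq_norm_div_two,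
    mul_left_comm, ← rpow_add (by positivity), neg_div, neg_add_cancel, rpow_zero, mul_one]

theorem integral_norm_add_smul_sq_gaussianMeasure (a : E) (c : ℝ) :
    ∫ z, ‖a + c • z‖ ^ 2 ∂gaussianMeasure E = ‖a‖ ^ 2 + finrank ℝ E * c ^ 2 := by
  have hexpand (z : E) : ‖a + c • z‖ ^ 2 = ‖a‖ ^ 2 + 2 * c * ⟪a, z⟫ + c ^ 2 * ‖z‖ ^ 2 := by
    rw [norm_add_sq_real, real_inner_smul_right, norm_smul, mul_pow, norm_eq_abs, sq_abs]
    ring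
  have hinner : Integrable (fun z : E ↦ ⟪a, z⟫) (gaussianMeasure E) :=
    integrable_gaussianMeasure_of_abs_le (by fun_prop) (C := ‖a‖) (k := 1) fun z ↦
      (abs_real_inner_le_norm a z).trans (by rw [pow_one]; gcongr; linarith)
  simp_rw [hexpand]
  rw [integral_add (by exact (integrable_const _).add (hinner.const_mul _))
      (integrable_norm_sq_gaussianMeasure.const_mul _),
    integral_add (integrable_const _) (hinner.const_mul _), integral_const_mul,
    integral_const_mul, integral_inner_gaussianMeasure, integral_norm_sq_gaussianMeasure,
    integral_const, probReal_univ, one_smul]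
  ring

theorem integral_comp_add_smul_le_of_strongConvexOn {α : ℝ} {V : E → ℝ}
    (hV : StrongConvexOn univ α V)
    (hint : ∀ (m : E) (s : ℝ), Integrable (fun z ↦ V (m + s • z)) (gaussianMeasure E))
    (m₀ m₁ : E) (s₀ s₁ : ℝ) {a b : ℝ} (ha : 0 ≤ a) (hb : 0 ≤ b) (hab : a + b = 1) :
    ∫ z, V ((a • m₀ + b • m₁) + (a * s₀ + b * s₁) • z) ∂gaussianMeasure E
      ≤ a * ∫ z, V (m₀ + s₀ • z) ∂gaussianMeasure E
        + b * ∫ z, V (m₁ + s₁ • z) ∂gaussianMeasure E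
        - α / 2 * a * b * (‖m₀ - m₁‖ ^ 2 + finrank ℝ E * (s₀ - s₁) ^ 2) := by
  have hpointwise (z : E) : V ((a • m₀ + b • m₁) + (a * s₀ + b * s₁) • z)
      ≤ a * V (m₀ + s₀ • z) + b * V (m₁ + s₁ • z)
        - α / 2 * a * b * ‖(m₀ - m₁) + (s₀ - s₁) • z‖ ^ 2 := by
    have hmid : (a • m₀ + b • m₁) + (a * s₀ + b * s₁) • z
        = a • (m₀ + s₀ • z) + b • (m₁ + s₁ • z) := by module
    have hdiff : (m₀ + s₀ • z) - (m₁ + s₁ • z) = (m₀ - m₁) + (s₀ - s₁) • z := by module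
    have := hV.2 (mem_univ (m₀ + s₀ • z)) (mem_univ (m₁ + s₁ • z)) ha hb hab
    rw [hdiff, smul_eq_mul, smul_eq_mul] at this
    rw [hmid]
    linear_combination this
  have hsq := integrable_norm_add_smul_sq_gaussianMeasure (E := E) (m₀ - m₁) (s₀ - s₁)
  have hsum : Integrable (fun z ↦ a * V (m₀ + s₀ • z) + b * V (m₁ + s₁ • z))
      (gaussianMeasure E) := ((hint _ _).const_mul a).add ((hint _ _).const_mul b)
  refine (integral_mono (hint _ _) (hsum.sub (hsq.const_mul (α / 2 * a * b)))
    hpointwise).trans_eq ?_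
  rw [integral_sub' hsum (hsq.const_mul _),
    integral_add ((hint _ _).const_mul a) ((hint _ _).const_mul b), integral_const_mul,
    integral_const_mul, integral_const_mul, integral_norm_add_smul_sq_gaussianMeasure]

end GaussianMeasure

section ChangeOfVariables

variable {E : Type*} [NormedAddCommGroup E] [InnerProductSpace ℝ E] [FiniteDimensional ℝ E]
  [MeasurableSpace E] [BorelSpace E]

theorem integral_eq_pow_mul_integral_comp_add_smul (F : E → ℝ) (m : E) {s : ℝ} (hs : 0 < s) :
    ∫ x, F x = s ^ Module.finrank ℝ E * ∫ z, F (m + s • z) := by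
  rw [Measure.integral_comp_smul_of_nonneg volume (fun x ↦ F (m + x)) s (hR := hs.le),
    integral_add_left_eq_self F m, smul_eq_mul, ← mul_assoc, mul_inv_cancel₀ (by positivity),
    one_mul]

end ChangeOfVariables

section KullbackLeibler

variable {d : ℕ}

theorem log_gaussPDF (m x : EuclideanSpace ℝ (Fin d)) {ε : ℝ} (hε : 0 < ε) :
    log (gaussPDF d m ε x) = -(d / 2) * log (2 * π * ε) - ‖x - m‖ ^ 2 / (2 * ε) := by
  rw [gaussPDF, log_mul (by positivity) (exp_ne_zero _), log_rpow (by positivity), log_exp]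
  ring

theorem pow_mul_gaussPDF_add_smul (m z : EuclideanSpace ℝ (Fin d)) {s : ℝ} (hs : 0 < s) :
    s ^ d * gaussPDF d m (s ^ 2) (m + s • z) = gaussianDensity z := by
  have hpow : (s ^ 2) ^ (-(d : ℝ) / 2) = (s ^ d)⁻¹ := by
    rw [← rpow_natCast s 2, ← rpow_mul hs.le, show ((2 : ℕ) : ℝ) * (-(d : ℝ) / 2) = -d by
      push_cast; ring, rpow_neg hs.le, rpow_natCast]
  have hexp : -‖m + s • z - m‖ ^ 2 / (2 * s ^ 2) = -‖z‖ ^ 2 / 2 := by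
    rw [add_sub_cancel_left, norm_smul, mul_pow, norm_eq_abs, sq_abs]
    field_simp
  rw [coe_gaussianDensity, gaussPDF, finrank_euclideanSpace_fin, mul_rpow (by positivity)
    (by positivity), hpow, hexp]
  field_simp

theorem klDensity_gaussPDF_sq {V : EuclideanSpace ℝ (Fin d) → ℝ} {Z : ℝ} (hZ : 0 < Z)
    (m : EuclideanSpace ℝ (Fin d)) {s : ℝ} (hs : 0 < s)
    (hV : Integrable (fun z ↦ V (m + s • z)) (gaussianMeasure _)) :
    klDensity d (gaussPDF d m (s ^ 2)) (fun x ↦ exp (-V x) / Z)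
      = ∫ z, V (m + s • z) ∂gaussianMeasure _ - d * log s - d / 2 * (log (2 * π) + 1)
        + log Z := by
  set p := gaussPDF d m (s ^ 2)
  set c := d / 2 * log (2 * π) + d * log s - log Z
  have hlog (z : EuclideanSpace ℝ (Fin d)) :
      log (p (m + s • z) / (exp (-V (m + s • z)) / Z)) = V (m + s • z) - ‖z‖ ^ 2 / 2 - c := by
    have hp : 0 < p (m + s • z) := by simp only [p, gaussPDF]; positivity
    rw [log_div hp.ne' (by positivity), log_div (exp_ne_zero _) hZ.ne', log_exp,
      log_gaussPDF _ _ (by positivity), add_sub_cancel_left, norm_smul, mul_pow, norm_eq_abs,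
      sq_abs, log_mul (by positivity) (by positivity), log_pow]
    field_simp
    ring
  calc klDensity d p (fun x ↦ exp (-V x) / Z)
      = ∫ z, log (p (m + s • z) / (exp (-V (m + s • z)) / Z)) ∂gaussianMeasure _ := by
        rw [klDensity, integral_eq_pow_mul_integral_comp_add_smul _ m hs, ← integral_const_mul,
          gaussianMeasure, integral_withDensity_eq_integral_smul measurable_gaussianDensity]
        congr 1 with z
        rw [finrank_euclideanSpace_fin, NNReal.smul_def, ← pow_mul_gaussPDF_add_smul m z hs,
          smul_eq_mul, mul_assoc]
    _ = ∫ z, (V (m + s • z) - ‖z‖ ^ 2 / 2 - c) ∂gaussianMeasure _ := by simp_rw [hlog]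
    _ = _ := by
      rw [integral_sub (by exact hV.sub (integrable_norm_sq_gaussianMeasure.div_const 2))
        (integrable_const c), integral_sub hV (integrable_norm_sq_gaussianMeasure.div_const 2),
        integral_div, integral_norm_sq_gaussianMeasure, finrank_euclideanSpace_fin]
      simp only [integral_const, probReal_univ, smul_eq_mul, one_mul, c]
      ring

end KullbackLeibler

theorem kl_geodesically_convex_isotropic_gaussians_general
    (d : ℕ) (α : ℝ)
    (V : EuclideanSpace ℝ (Fin d) → ℝ)
    (hV : ContDiff ℝ 2 V)
    (hHess : ∀ x v : EuclideanSpace ℝ (Fin d),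
      α * ‖v‖ ^ 2 ≤ ⟪v, (fderiv ℝ (gradient V) x) v⟫)
    (hVgrowth : ∃ (C : ℝ) (k : ℕ), ∀ x, |V x| ≤ C * (1 + ‖x‖) ^ k)
    (hint : Integrable (fun x => Real.exp (-V x)))
    (πd : EuclideanSpace ℝ (Fin d) → ℝ)
    (hπd : ∀ x, πd x = Real.exp (-V x) / ∫ y, Real.exp (-V y))
    (m₀ m₁ : EuclideanSpace ℝ (Fin d)) (ε₀ ε₁ : ℝ) (hε₀ : 0 < ε₀) (hε₁ : 0 < ε₁)
    (f : ℝ → ℝ)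
    (hf : ∀ t, f t = klDensity d
      (gaussPDF d ((1 - t) • m₀ + t • m₁) (((1 - t) * Real.sqrt ε₀ + t * Real.sqrt ε₁) ^ 2)) πd) :
    ∀ t ∈ Set.Icc (0 : ℝ) 1,
      f t ≤ (1 - t) * f 0 + t * f 1 -
        (α / 2) * t * (1 - t) *
          (‖m₀ - m₁‖ ^ 2 + (d : ℝ) * (Real.sqrt ε₀ - Real.sqrt ε₁) ^ 2) := by
  rintro t ⟨ht₀, ht₁⟩
  set s₀ := √ε₀
  set s₁ := √ε₁
  have hs₀ : 0 < s₀ := sqrt_pos.2 hε₀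
  have hs₁ : 0 < s₁ := sqrt_pos.2 hε₁
  have hsₜ : 0 < (1 - t) * s₀ + t * s₁ := by
    simpa using convex_Ioi (0 : ℝ) hs₀ hs₁ (sub_nonneg.2 ht₁) ht₀ (sub_add_cancel 1 t)
  have hVint := integrable_comp_add_smul_gaussianMeasure hV.continuous hVgrowth
  have hf₀ : f 0 = klDensity d (gaussPDF d m₀ (s₀ ^ 2)) πd := by simp [hf]
  have hf₁ : f 1 = klDensity d (gaussPDF d m₁ (s₁ ^ 2)) πd := by simp [hf]
  obtain rfl : πd = fun x ↦ exp (-V x) / ∫ y, exp (-V y) := funext hπd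
  have hkl (m : EuclideanSpace ℝ (Fin d)) {s : ℝ} (hs : 0 < s) :=
    klDensity_gaussPDF_sq (integral_exp_pos hint) m hs (hVint m s)
  have hpot := integral_comp_add_smul_le_of_strongConvexOn
    (strongConvexOn_univ_of_hessian hV hHess) hVint m₀ m₁ s₀ s₁ (sub_nonneg.2 ht₁) ht₀
    (sub_add_cancel 1 t)
  have hent : (1 - t) * log s₀ + t * log s₁ ≤ log ((1 - t) * s₀ + t * s₁) := by
    simpa using strictConcaveOn_log_Ioi.concaveOn.2 hs₀ hs₁ (sub_nonneg.2 ht₁) ht₀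
      (sub_add_cancel 1 t)
  rw [finrank_euclideanSpace_fin] at hpot
  rw [hf t, hf₀, hf₁, hkl _ hsₜ, hkl _ hs₀, hkl _ hs₁]
  nlinarith [mul_le_mul_of_nonneg_left hent d.cast_nonneg]

/-- `α`-geodesic-convexity of `KL(·|π)` along Bures–Wasserstein geodesics of isotropic
Gaussians, when `∇²V ⪰ α I_d`: along the geodesic `t ↦ N(m_t, ε_t I_d)` with
`m_t = (1−t)m₀ + t m₁` and `ε_t = ((1−t)√ε₀ + t√ε₁)²`,
`f(t) ≤ (1−t)f(0) + t f(1) − (α/2) t(1−t)(‖m₀−m₁‖² + d(√ε₀−√ε₁)²)`. -/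
theorem kl_geodesically_convex_isotropic_gaussians
    (d : ℕ) (hd : 1 ≤ d) (α : ℝ)
    (V : EuclideanSpace ℝ (Fin d) → ℝ)
    (hV : ContDiff ℝ 2 V)
    (hHess : ∀ x v : EuclideanSpace ℝ (Fin d),
      α * ‖v‖ ^ 2 ≤ ⟪v, (fderiv ℝ (gradient V) x) v⟫)
    (hVgrowth : ∃ (C : ℝ) (k : ℕ), ∀ x, |V x| ≤ C * (1 + ‖x‖) ^ k)
    (hgradVgrowth : ∃ (C : ℝ) (k : ℕ), ∀ x, ‖gradient V x‖ ≤ C * (1 + ‖x‖) ^ k)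
    (hint : Integrable (fun x => Real.exp (-V x)))
    (πd : EuclideanSpace ℝ (Fin d) → ℝ)
    (hπd : ∀ x, πd x = Real.exp (-V x) / ∫ y, Real.exp (-V y))
    (m₀ m₁ : EuclideanSpace ℝ (Fin d)) (ε₀ ε₁ : ℝ) (hε₀ : 0 < ε₀) (hε₁ : 0 < ε₁)
    (f : ℝ → ℝ)
    (hf : ∀ t, f t = klDensity d
      (gaussPDF d ((1 - t) • m₀ + t • m₁) (((1 - t) * Real.sqrt ε₀ + t * Real.sqrt ε₁) ^ 2)) πd) :
    ∀ t ∈ Set.Icc (0 : ℝ) 1,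
      f t ≤ (1 - t) * f 0 + t * f 1 -
        (α / 2) * t * (1 - t) *
          (‖m₀ - m₁‖ ^ 2 + (d : ℝ) * (Real.sqrt ε₀ - Real.sqrt ε₁) ^ 2) :=
  kl_geodesically_convex_isotropic_gaussians_general d α V hV hHess hVgrowth hint πd hπd m₀ m₁ ε₀ ε₁
    hε₀ hε₁ f hf
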